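/- arXiv:1309.5927 — 3 statements merged into one kernel-verified Lean document; each statement's English description precedes it below -/
import Mathlib

section
/- The generating function of m-labeled binary trees that avoid a fixed m-labeled binary tree u of size p is A(z) = (1 − 2mz − √(1 − 4mz + 4mz^{p+2}))/(2mz²); consequently the generating function of m-labeled binary trees containing u as a subtree is C(z) = (√(1 − 4mz + 4mz^{p+2}) − √(1−4mz))/(2mz²), as an identity of formal power series. -/
/-!
Splitting a tree at its root, the trees whose children all lie in a class with series `F` have
series `m (1 + z F)²`. The trees whose children avoid `u` are the trees avoiding `u` together
with `u` itself, so `A + z^p = m (1 + z A)²`; likewise `B = m (1 + z B)²` for all trees, and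
`B = A + C`. Completing the square, `1 - 2mz - 2mz² A` squares to `1 - 4mz + 4mz^(p+2)` and
`1 - 2mz - 2mz² B` squares to `1 - 4mz`.
-/

inductive BTree (m : ℕ) : Type where
  | node : Fin m → Option (BTree m) → Option (BTree m) → BTree m

namespace BTree
variable {m : ℕ}

def edges : BTree m → ℕ
  | .node _ none none => 0
  | .node _ (some l) none => 1 + edges l
  | .node _ none (some r) => 1 + edges r
  | .node _ (some l) (some r) => 2 + edges l + edges r

def subs : BTree m → List (BTree m)
  | .node a none none => [.node a none none]
  | .node a (some l) none => .node a (some l) none :: subs l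
  | .node a none (some r) => .node a none (some r) :: subs r
  | .node a (some l) (some r) => .node a (some l) (some r) :: (subs l ++ subs r)

def rootDeg : BTree m → ℕ
  | .node _ l r => (if l.isSome then 1 else 0) + (if r.isSome then 1 else 0)

end BTree

open PowerSeries

section CountingSeries

open Finset

variable {α β : Type*}

/-- `Nat.card` of an infinite fiber is `0`, hence the finiteness hypotheses below. -/
noncomputable def countingSeries (w : α → ℕ) : ℚ⟦X⟧ :=
  mk fun n => (Nat.card {a // w a = n} : ℚ)

theorem countingSeries_congr {w : α → ℕ} {v : β → ℕ} (e : α ≃ β) (he : ∀ a, v (e a) = w a) :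
    countingSeries v = countingSeries w := by
  ext n
  simp only [countingSeries, coeff_mk]
  exact congrArg _ (Nat.card_congr (e.subtypeEquiv fun a => by rw [he])).symm

theorem countingSeries_const [Finite α] (k : ℕ) :
    countingSeries (fun _ : α => k) = C (Nat.card α : ℚ) * X ^ k := by
  ext n
  rw [countingSeries, coeff_mk, coeff_C_mul_X_pow]
  split_ifs with h
  · rw [h, Nat.card_congr (Equiv.subtypeUnivEquiv fun _ => rfl)]
  · have : IsEmpty {_a : α // k = n} := ⟨fun a => h a.2.symm⟩
    rw [Nat.card_of_isEmpty, Nat.cast_zero]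

def optionWeight (w : α → ℕ) : Option α → ℕ :=
  fun o => o.elim 0 (w · + 1)

theorem optionWeight_eq_zero_iff {w : α → ℕ} {o : Option α} :
    optionWeight w o = 0 ↔ o = none := by
  cases o <;> simp [optionWeight]

def optionWeightFiberSuccEquiv (w : α → ℕ) (n : ℕ) :
    {o // optionWeight w o = n + 1} ≃ {a // w a = n} where
  toFun o := match o with
    | ⟨some a, h⟩ => ⟨a, Nat.succ_injective h⟩
  invFun a := ⟨some a.1, congrArg (· + 1) a.2⟩
  left_inv := by rintro ⟨_ | a, h⟩ <;> trivial
  right_inv _ := rfl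

theorem countingSeries_optionWeight (w : α → ℕ) :
    countingSeries (optionWeight w) = 1 + X * countingSeries w := by
  ext (_ | n)
  · rw [countingSeries, coeff_mk, map_add, coeff_zero_X_mul, add_zero, coeff_one, if_pos rfl,
      Nat.card_congr (Equiv.subtypeEquivRight fun _ => optionWeight_eq_zero_iff), Nat.card_unique,
      Nat.cast_one]
  · rw [countingSeries, coeff_mk, map_add, coeff_succ_X_mul, coeff_one, if_neg n.succ_ne_zero,
      zero_add, Nat.card_congr (optionWeightFiberSuccEquiv w n), countingSeries, coeff_mk]

theorem finite_optionWeight_fiber {w : α → ℕ} (hw : ∀ n, Finite {a // w a = n}) (n : ℕ) :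
    Finite {o // optionWeight w o = n} := by
  cases n with
  | zero =>
    exact Finite.of_equiv _ (Equiv.subtypeEquivRight fun _ => optionWeight_eq_zero_iff).symm
  | succ n => exact Finite.of_equiv _ (optionWeightFiberSuccEquiv w n).symm

def prodFiberEquiv (w : α → ℕ) (v : β → ℕ) (n : ℕ) :
    {x : α × β // w x.1 + v x.2 = n} ≃
      Σ ij : antidiagonal n, {a // w a = ij.1.1} × {b // v b = ij.1.2} where
  toFun x := ⟨⟨(w x.1.1, v x.1.2), mem_antidiagonal.2 x.2⟩, ⟨x.1.1, rfl⟩, ⟨x.1.2, rfl⟩⟩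
  invFun y := ⟨(y.2.1, y.2.2), by rw [y.2.1.2, y.2.2.2]; exact mem_antidiagonal.1 y.1.2⟩
  left_inv _ := rfl
  right_inv := by
    rintro ⟨⟨⟨i, j⟩, hij⟩, ⟨a, ha⟩, ⟨b, hb⟩⟩
    dsimp only at ha hb
    subst ha hb
    rfl

theorem finite_prod_fiber {w : α → ℕ} {v : β → ℕ} (hw : ∀ n, Finite {a // w a = n})
    (hv : ∀ n, Finite {b // v b = n}) (n : ℕ) : Finite {x : α × β // w x.1 + v x.2 = n} :=
  Finite.of_equiv _ (prodFiberEquiv w v n).symm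

theorem countingSeries_prod {w : α → ℕ} {v : β → ℕ} (hw : ∀ n, Finite {a // w a = n})
    (hv : ∀ n, Finite {b // v b = n}) :
    countingSeries (fun x : α × β => w x.1 + v x.2) = countingSeries w * countingSeries v := by
  ext n
  rw [countingSeries, coeff_mk, coeff_mul, Nat.card_congr (prodFiberEquiv w v n), Nat.card_sigma]
  push_cast [Nat.card_prod]
  simp only [countingSeries, coeff_mk]
  exact sum_coe_sort (antidiagonal n) fun ij =>
    (Nat.card {a // w a = ij.1} : ℚ) * Nat.card {b // v b = ij.2}

theorem countingSeries_sum {w : α → ℕ} {v : β → ℕ} (hw : ∀ n, Finite {a // w a = n})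
    (hv : ∀ n, Finite {b // v b = n}) :
    countingSeries (Sum.elim w v) = countingSeries w + countingSeries v := by
  ext n
  simp only [countingSeries, coeff_mk, map_add, Nat.card_congr Equiv.subtypeSum]
  exact_mod_cast @Nat.card_sum _ _ (hw n) (hv n)

end CountingSeries

namespace BTree

variable {m : ℕ}

def children : BTree m → List (BTree m)
  | node _ l r => l.toList ++ r.toList

theorem edges_node (a : Fin m) (l r : Option (BTree m)) :
    (node a l r).edges = optionWeight edges l + optionWeight edges r := by
  cases l <;> cases r <;> simp only [edges, optionWeight, Option.elim] <;> omega

theorem edges_lt_of_mem_children {c t : BTree m} (h : c ∈ t.children) : c.edges < t.edges := by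
  obtain ⟨a, l, r⟩ := t
  rw [edges_node]
  rcases List.mem_append.1 h with h | h <;> rw [Option.mem_toList] at h <;> subst h <;>
    simp only [optionWeight, Option.elim] <;> omega

theorem subs_eq_cons (t : BTree m) : t.subs = t :: t.children.flatMap subs := by
  obtain ⟨a, _ | l, _ | r⟩ := t <;> simp [subs, children]

theorem mem_subs {s t : BTree m} : s ∈ t.subs ↔ s = t ∨ ∃ c ∈ t.children, s ∈ c.subs := by
  rw [subs_eq_cons, List.mem_cons, List.mem_flatMap]

theorem edges_le_of_mem_subs {s t : BTree m} (h : s ∈ t.subs) : s.edges ≤ t.edges := by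
  obtain rfl | ⟨c, hc, hs⟩ := mem_subs.1 h
  · exact le_rfl
  · exact (edges_le_of_mem_subs hs).trans (edges_lt_of_mem_children hc).le
termination_by t.edges
decreasing_by exact edges_lt_of_mem_children hc

theorem finite_setOf_edges_lt (n : ℕ) : {t : BTree m | t.edges < n}.Finite := by
  induction n with
  | zero => simp
  | succ n ih =>
    have hS : {o : Option (BTree m) | ∀ c ∈ o, c.edges < n}.Finite :=
      Set.finite_option.2 (by simpa using ih)
    refine ((Set.finite_univ.prod (hS.prod hS)).image
      fun x : Fin m × Option (BTree m) × Option (BTree m) => node x.1 x.2.1 x.2.2).subset ?_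
    rintro ⟨a, l, r⟩ ht
    refine ⟨(a, l, r), ⟨Set.mem_univ a, ?_, ?_⟩, rfl⟩ <;> rintro c rfl <;>
      simp only [Set.mem_ofPred_eq, edges_node, optionWeight, Option.elim] at ht <;> omega

theorem finite_edges_fiber (P : BTree m → Prop) (n : ℕ) :
    Finite {t : {t // P t} // t.1.edges = n} :=
  have : Finite {t : BTree m // t.edges < n + 1} := (finite_setOf_edges_lt (n + 1)).to_subtype
  Finite.of_injective
    (fun t => (⟨t.1.1, Nat.lt_succ_of_le t.2.le⟩ : {t : BTree m // t.edges < n + 1}))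
    fun _ _ h => Subtype.ext (Subtype.ext (congrArg Subtype.val h :))

noncomputable def treeSeries (P : BTree m → Prop) : ℚ⟦X⟧ :=
  countingSeries fun t : {t // P t} => t.1.edges

theorem treeSeries_eq_mk (P : BTree m → Prop) :
    treeSeries P = mk fun n => (Nat.card {t : BTree m // t.edges = n ∧ P t} : ℚ) := by
  ext n
  rw [treeSeries, countingSeries, coeff_mk, coeff_mk,
    Nat.card_congr (Equiv.subtypeSubtypeEquivSubtypeInter P (edges · = n)),
    Nat.card_congr (Equiv.subtypeEquivRight fun _ => and_comm)]

theorem treeSeries_or {P Q : BTree m → Prop} (h : Disjoint P Q) :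
    treeSeries (fun t => P t ∨ Q t) = treeSeries P + treeSeries Q := by
  classical
  have hweight : ∀ x : {t // P t} ⊕ {t // Q t}, ((subtypeOrEquiv P Q h).symm x).1.edges =
      Sum.elim (fun t : {t // P t} => t.1.edges) (fun t : {t // Q t} => t.1.edges) x := by
    rintro (⟨t, _⟩ | ⟨t, _⟩) <;> rfl
  rw [treeSeries, countingSeries_congr _ hweight,
    countingSeries_sum (finite_edges_fiber P) (finite_edges_fiber Q)]
  rfl

def childrenEquiv (Q : BTree m → Prop) :
    Fin m × Option {t // Q t} × Option {t // Q t} ≃ {t : BTree m // ∀ c ∈ t.children, Q c} where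
  toFun x := ⟨node x.1 (x.2.1.map (↑)) (x.2.2.map (↑)), by
    rintro c hc
    rcases List.mem_append.1 hc with hc | hc <;>
      simp only [Option.mem_toList, Option.map_eq_some_iff] at hc <;>
      obtain ⟨c, -, rfl⟩ := hc <;> exact c.2⟩
  invFun t := match t with
    | ⟨node a l r, h⟩ =>
      (a, l.pmap Subtype.mk fun c hc => h c (by simp [children, hc]),
        r.pmap Subtype.mk fun c hc => h c (by simp [children, hc]))
  left_inv := by rintro ⟨a, _ | l, _ | r⟩ <;> rfl
  right_inv := by rintro ⟨⟨a, _ | l, _ | r⟩, h⟩ <;> rfl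

theorem treeSeries_children (Q : BTree m → Prop) :
    treeSeries (fun t => ∀ c ∈ t.children, Q c) = C (m : ℚ) * (1 + X * treeSeries Q) ^ 2 := by
  have hw := finite_edges_fiber Q
  have hweight : ∀ x : Fin m × Option {t // Q t} × Option {t // Q t},
      (childrenEquiv Q x).1.edges = 0 + (optionWeight (fun t : {t // Q t} => t.1.edges) x.2.1 +
        optionWeight (fun t : {t // Q t} => t.1.edges) x.2.2) := by
    rintro ⟨a, l, r⟩
    rw [zero_add]
    exact (edges_node a _ _).trans (by cases l <;> cases r <;> rfl)
  rw [treeSeries, countingSeries_congr (childrenEquiv Q) hweight,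
    countingSeries_prod (w := fun _ : Fin m => 0) (fun _ => inferInstance)
      (finite_prod_fiber (finite_optionWeight_fiber hw) (finite_optionWeight_fiber hw)),
    countingSeries_prod (finite_optionWeight_fiber hw) (finite_optionWeight_fiber hw),
    countingSeries_const, countingSeries_optionWeight, Nat.card_fin, pow_zero, mul_one, sq]
  rfl

theorem treeSeries_true :
    treeSeries (fun _ : BTree m => True) =
      C (m : ℚ) * (1 + X * treeSeries fun _ : BTree m => True) ^ 2 := by
  simpa using treeSeries_children (fun _ : BTree m => True)

theorem treeSeries_eq_X_pow_edges (u : BTree m) : treeSeries (· = u) = X ^ u.edges := by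
  have hconst : (fun t : {t // t = u} => t.1.edges) = fun _ => u.edges :=
    funext fun t => congrArg edges t.2
  rw [treeSeries, hconst, countingSeries_const, Nat.card_unique, Nat.cast_one, map_one, one_mul]

theorem children_avoid_iff {u t : BTree m} :
    (∀ c ∈ t.children, u ∉ c.subs) ↔ u ∉ t.subs ∨ t = u := by
  rw [mem_subs (t := t)]
  constructor
  · intro h
    by_cases htu : t = u
    · exact Or.inr htu
    · exact Or.inl (by rintro (rfl | ⟨c, hc, hu⟩); exacts [htu rfl, h c hc hu])
  · rintro (h | rfl) c hc hu
    · exact h (Or.inr ⟨c, hc, hu⟩)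
    · exact (edges_le_of_mem_subs hu).not_gt (edges_lt_of_mem_children hc)

theorem treeSeries_avoid_add_X_pow (u : BTree m) :
    treeSeries (fun t => u ∉ t.subs) + X ^ u.edges =
      C (m : ℚ) * (1 + X * treeSeries fun t => u ∉ t.subs) ^ 2 := by
  have hdisj : Disjoint (fun t => u ∉ t.subs) (· = u) :=
    le_compl_iff_disjoint_right.mp fun t h htu => h (htu ▸ mem_subs.2 (Or.inl rfl))
  rw [← treeSeries_children, ← treeSeries_eq_X_pow_edges, ← treeSeries_or hdisj]
  congr
  exact funext fun t => propext children_avoid_iff.symm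

theorem treeSeries_true_eq_avoid_add_contain (u : BTree m) :
    treeSeries (fun _ : BTree m => True) =
      treeSeries (fun t => u ∉ t.subs) + treeSeries (fun t => u ∈ t.subs) := by
  have hdisj : Disjoint (fun t : BTree m => u ∉ t.subs) (fun t => u ∈ t.subs) :=
    le_compl_iff_disjoint_right.mp fun _ h => h
  rw [← treeSeries_or hdisj]
  congr
  exact funext fun t => propext (iff_of_true trivial (em' _))

end BTree

/-- Generating function of `m`-labeled binary trees avoiding a fixed tree `u` of size `p`:
`A(z) = (1 − 2mz − √(1 − 4mz + 4mz^{p+2}))/(2mz²)`, and consequently the generating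
function of trees containing `u` is `C(z) = (√(1 − 4mz + 4mz^{p+2}) − √(1−4mz))/(2mz²)`,
as identities of formal power series (the square roots being the unique power series
with constant coefficient 1 squaring to the respective radicands). -/
theorem gf_binary_avoiding_containing (m p : ℕ) (u : BTree m) (hu : BTree.edges u = p) :
    ∃ S S0 : PowerSeries ℚ,
      S ^ 2 = 1 - 4 * C (m : ℚ) * X + 4 * C (m : ℚ) * X ^ (p + 2) ∧
      constantCoeff S = 1 ∧
      S0 ^ 2 = 1 - 4 * C (m : ℚ) * X ∧
      constantCoeff S0 = 1 ∧
      2 * C (m : ℚ) * X ^ 2 *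
          (mk fun n => (Nat.card {t : BTree m // BTree.edges t = n ∧ u ∉ BTree.subs t} : ℚ)) =
        1 - 2 * C (m : ℚ) * X - S ∧
      2 * C (m : ℚ) * X ^ 2 *
          (mk fun n => (Nat.card {t : BTree m // BTree.edges t = n ∧ u ∈ BTree.subs t} : ℚ)) =
        S - S0 := by
  simp only [← BTree.treeSeries_eq_mk]
  set A := BTree.treeSeries fun t => u ∉ t.subs
  set B := BTree.treeSeries fun _ : BTree m => True
  have hA : A + X ^ p = C (m : ℚ) * (1 + X * A) ^ 2 := hu ▸ BTree.treeSeries_avoid_add_X_pow u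
  have hB : B = C (m : ℚ) * (1 + X * B) ^ 2 := BTree.treeSeries_true
  have hBA := BTree.treeSeries_true_eq_avoid_add_contain u
  refine ⟨1 - 2 * C (m : ℚ) * X - 2 * C (m : ℚ) * X ^ 2 * A,
    1 - 2 * C (m : ℚ) * X - 2 * C (m : ℚ) * X ^ 2 * B, ?_, by simp, ?_, by simp, by ring, ?_⟩
  · linear_combination (-4 * C (m : ℚ) * X ^ 2) * hA
  · linear_combination (-4 * C (m : ℚ) * X ^ 2) * hB
  · linear_combination (-2 * C (m : ℚ) * X ^ 2) * hBA
end

section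
/- For two trees u, v of equal size p, and any n, the number of m-labeled trees of size n containing u as a subtree equals the number containing v as a subtree. -/
inductive UTree (σ : Type) : Type where
  | node : σ → List (UTree σ) → UTree σ

namespace UTree
variable {σ : Type}

noncomputable instance : DecidableEq (UTree σ) := Classical.decEq _

def children : UTree σ → List (UTree σ)
  | node _ cs => cs

def subs : UTree σ → List (UTree σ)
  | node a cs => node a cs :: (cs.attach.map (fun ⟨c, _⟩ => subs c)).flatten

def sibs : UTree σ → List (List (UTree σ))
  | node _ cs => cs.tails.filter (fun l => !l.isEmpty)
      ++ (cs.attach.map (fun ⟨c, _⟩ => sibs c)).flatten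

def sibseqs (t : UTree σ) : List (List (UTree σ)) := [t] :: sibs t

def edges : UTree σ → ℕ
  | node _ cs => cs.length + (cs.attach.map (fun ⟨c, _⟩ => edges c)).sum

def rootDeg : UTree σ → ℕ
  | node _ cs => cs.length

def nodes : UTree σ → ℕ
  | node _ cs => 1 + (cs.attach.map (fun ⟨c, _⟩ => nodes c)).sum

end UTree

/-!
Replace, top-down, every occurrence of `u` by `v` and of `v` by `u`. Since `|u| = |v|` this
preserves size, and it sends a tree containing `u` to one containing `v`. It is an involution
because a tree of size `|u|` other than `u` and `v` cannot contain either of them, so the swap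
never creates a new occurrence that a second pass would act on.
-/

namespace UTree
variable {σ : Type}

@[induction_eliminator]
protected theorem ind {motive : UTree σ → Prop}
    (node : ∀ a cs, (∀ c ∈ cs, motive c) → motive (node a cs)) : ∀ t, motive t
  | .node a cs => node a cs fun c _ => UTree.ind node c

lemma edges_node (a : σ) (cs : List (UTree σ)) :
    edges (node a cs) = cs.length + (cs.map edges).sum := by
  rw [edges]; simp

lemma mem_subs_node {s : UTree σ} {a : σ} {cs : List (UTree σ)} :
    s ∈ subs (node a cs) ↔ s = node a cs ∨ ∃ c ∈ cs, s ∈ subs c := by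
  rw [subs]; simp

lemma self_mem_subs (t : UTree σ) : t ∈ subs t := by
  cases t; exact mem_subs_node.2 (.inl rfl)

lemma edges_lt_of_mem {c : UTree σ} {a : σ} {cs : List (UTree σ)} (h : c ∈ cs) :
    edges c < edges (node a cs) := by
  have hle : edges c ≤ (cs.map edges).sum := List.le_sum_of_mem (List.mem_map_of_mem h)
  have hpos : 0 < cs.length := List.length_pos_of_mem h
  rw [edges_node]; omega

lemma edges_le_of_mem_subs {s t : UTree σ} (h : s ∈ subs t) : edges s ≤ edges t := by
  induction t with
  | node a cs ih =>
    obtain rfl | ⟨c, hc, hs⟩ := mem_subs_node.1 h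
    · rfl
    · exact (ih c hc hs).trans (edges_lt_of_mem hc).le

lemma eq_of_mem_subs_of_edges_le {s t : UTree σ} (h : s ∈ subs t) (he : edges t ≤ edges s) :
    s = t := by
  cases t with
  | node a cs =>
    obtain rfl | ⟨c, hc, hs⟩ := mem_subs_node.1 h
    · rfl
    · have := (edges_le_of_mem_subs hs).trans_lt (edges_lt_of_mem (a := a) hc); omega

noncomputable def swap (u v : UTree σ) : UTree σ → UTree σ
  | node a cs =>
    if node a cs = u then v else if node a cs = v then u else node a (cs.map (swap u v))

variable {u v : UTree σ}

@[simp] lemma swap_left : swap u v u = v := by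
  cases u; rw [swap, if_pos rfl]

@[simp] lemma swap_right : swap u v v = u := by
  cases v; rw [swap]; split_ifs with h <;> simp_all

lemma swap_node_of_ne {a : σ} {cs : List (UTree σ)} (hu : node a cs ≠ u) (hv : node a cs ≠ v) :
    swap u v (node a cs) = node a (cs.map (swap u v)) := by
  rw [swap, if_neg hu, if_neg hv]

lemma swap_of_not_mem_subs {t : UTree σ} (hu : u ∉ subs t) (hv : v ∉ subs t) :
    swap u v t = t := by
  induction t with
  | node a cs ih =>
    have hne : ∀ {w}, w ∉ subs (node a cs) → node a cs ≠ w := fun hw h => hw (h ▸ self_mem_subs _)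
    have hchild : ∀ {w}, w ∉ subs (node a cs) → ∀ c ∈ cs, w ∉ subs c :=
      fun hw c hc h => hw (mem_subs_node.2 (.inr ⟨c, hc, h⟩))
    rw [swap_node_of_ne (hne hu) (hne hv), List.map_congr_left (l := cs) (g := id), List.map_id]
    exact fun c hc => ih c hc (hchild hu c hc) (hchild hv c hc)

lemma edges_swap (huv : edges u = edges v) (t : UTree σ) : edges (swap u v t) = edges t := by
  induction t with
  | node a cs ih =>
    by_cases hu : node a cs = u
    · rw [hu, swap_left, huv]
    by_cases hv : node a cs = v
    · rw [hv, swap_right, huv]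
    rw [swap_node_of_ne hu hv, edges_node, edges_node, List.length_map, List.map_map]
    congr 2
    exact List.map_congr_left ih

lemma mem_subs_swap (huv : edges u = edges v) {t : UTree σ} (h : u ∈ subs t) :
    v ∈ subs (swap u v t) := by
  induction t with
  | node a cs ih =>
    by_cases hu : node a cs = u
    · rw [hu, swap_left]; exact self_mem_subs v
    by_cases hv : node a cs = v
    · exact absurd (eq_of_mem_subs_of_edges_le h (hv ▸ huv.ge)).symm hu
    obtain rfl | ⟨c, hc, hsc⟩ := mem_subs_node.1 h
    · exact absurd rfl hu
    rw [swap_node_of_ne hu hv]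
    exact mem_subs_node.2 (.inr ⟨swap u v c, List.mem_map_of_mem hc, ih c hc hsc⟩)

lemma swap_comm : swap u v = swap v u := by
  funext t
  induction t with
  | node a cs ih =>
    by_cases hu : node a cs = u
    · by_cases hv : node a cs = v
      · subst hu hv; rfl
      · rw [hu, swap_left, swap_right]
    by_cases hv : node a cs = v
    · rw [hv, swap_right, swap_left]
    rw [swap_node_of_ne hu hv, swap_node_of_ne hv hu, List.map_congr_left ih]

/-- A tree of the common size of `u` and `v` other than them contains neither, so `swap` fixes it;
any other size is preserved by `swap` and separates the result from `u` and `v`. -/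
lemma swap_ne_of_ne (huv : edges u = edges v) {t : UTree σ} (hu : t ≠ u) (hv : t ≠ v) :
    swap u v t ≠ u ∧ swap u v t ≠ v := by
  by_cases he : edges t = edges u
  · have hu' : u ∉ subs t := fun h => hu (eq_of_mem_subs_of_edges_le h he.le).symm
    have hv' : v ∉ subs t := fun h => hv (eq_of_mem_subs_of_edges_le h (he.trans huv).le).symm
    rw [swap_of_not_mem_subs hu' hv']
    exact ⟨hu, hv⟩
  · constructor <;> intro h <;> apply he
    · rw [← edges_swap huv t, h]
    · rw [← edges_swap huv t, h, huv]

lemma swap_involutive (huv : edges u = edges v) : Function.Involutive (swap u v) := by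
  intro t
  induction t with
  | node a cs ih =>
    by_cases hu : node a cs = u
    · rw [hu, swap_left, swap_right]
    by_cases hv : node a cs = v
    · rw [hv, swap_right, swap_left]
    obtain ⟨hu', hv'⟩ := swap_ne_of_ne huv hu hv
    rw [swap_node_of_ne hu hv] at hu' hv' ⊢
    rw [swap_node_of_ne hu' hv', List.map_map,
      List.map_congr_left (f := swap u v ∘ swap u v) (g := id) ih, List.map_id]

lemma mem_subs_swap_iff (huv : edges u = edges v) {t : UTree σ} :
    v ∈ subs (swap u v t) ↔ u ∈ subs t := by
  refine ⟨fun h => ?_, mem_subs_swap huv⟩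
  simpa only [← swap_comm, swap_involutive huv t] using mem_subs_swap huv.symm h

end UTree

/-- For trees `u`, `v` of equal size `p`, and any `n`, the number of `m`-labeled trees of
size `n` containing `u` as a subtree equals the number containing `v` as a subtree. -/
theorem card_containing_eq_of_size_eq (m p n : ℕ) (u v : UTree (Fin m))
    (hu : UTree.edges u = p) (hv : UTree.edges v = p) :
    Nat.card {t : UTree (Fin m) // UTree.edges t = n ∧ u ∈ UTree.subs t} =
      Nat.card {t : UTree (Fin m) // UTree.edges t = n ∧ v ∈ UTree.subs t} := by
  have huv : UTree.edges u = UTree.edges v := hu.trans hv.symm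
  refine Nat.card_congr (((UTree.swap_involutive huv).toPerm _).subtypeEquiv fun t => ?_)
  rw [Function.Involutive.coe_toPerm, UTree.edges_swap huv, UTree.mem_subs_swap_iff huv]
end

section
/- For every c ≥ 1, every integer p ≥ 1, and every z in the region D = {z ∈ ℂ : |z| < 1/2, z ∉ [1/4, 1/2]}, the polynomial c(1−4z) + 4z^{p+2} does not vanish; equivalently, the rational function u_p(z) = 4z^{p+2}/(1−4z) does not take any value in the real half-line (−∞, −1] for z ∈ D. -/
/-!
Write `n = p + 2` and suppose `4 z^n = r (1 - 4z)` with `r ≤ -1`. Comparing imaginary parts gives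
`Im (z^n) = -r Im z`; since `z^n - \bar z^n` factors through `z - \bar z`,
`|Im (z^n)| ≤ n |z|^(n-1) |Im z| < |Im z|` on `|z| < 1/2`, which forces `z` to be real.
For real `x ∈ (-1/2, 1/4)` the equation fails because `4x^n + (1 - 4x) > 0`.
-/

open Complex ComplexConjugate Finset

theorem norm_pow_sub_pow_le {A : Type*} [NormedCommRing A] [NormOneClass A] {a b : A} {R : ℝ}
    (ha : ‖a‖ ≤ R) (hb : ‖b‖ ≤ R) (n : ℕ) :
    ‖a ^ n - b ^ n‖ ≤ n * R ^ (n - 1) * ‖a - b‖ := by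
  have hterm : ∀ i ∈ range n, ‖a ^ i * b ^ (n - 1 - i)‖ ≤ R ^ (n - 1) := by
    intro i hi
    have hR : 0 ≤ R := (norm_nonneg a).trans ha
    calc ‖a ^ i * b ^ (n - 1 - i)‖ ≤ ‖a‖ ^ i * ‖b‖ ^ (n - 1 - i) :=
          norm_mul_le_of_le (norm_pow_le a i) (norm_pow_le b _)
      _ ≤ R ^ i * R ^ (n - 1 - i) := by gcongr
      _ = R ^ (n - 1) := by rw [← pow_add, Nat.add_sub_cancel' (by grind)]
  calc ‖a ^ n - b ^ n‖ = ‖(∑ i ∈ range n, a ^ i * b ^ (n - 1 - i)) * (a - b)‖ := by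
        rw [geom_sum₂_mul]
    _ ≤ n * R ^ (n - 1) * ‖a - b‖ := by
        refine norm_mul_le_of_le ?_ le_rfl
        simpa using norm_sum_le_of_le _ hterm

theorem nat_mul_pow_pred_lt_one {n : ℕ} (hn : 2 ≤ n) {t : ℝ} (ht₀ : 0 ≤ t) (ht : t < 1 / 2) :
    n * t ^ (n - 1) < 1 := by
  have hn_le : (n : ℝ) ≤ 2 ^ (n - 1) := by
    have := Nat.lt_two_pow_self (n := n - 1)
    exact_mod_cast (by omega : n ≤ 2 ^ (n - 1))
  calc n * t ^ (n - 1) ≤ 2 ^ (n - 1) * t ^ (n - 1) := by gcongr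
    _ < 2 ^ (n - 1) * (1 / 2) ^ (n - 1) := by gcongr; omega
    _ = 1 := by rw [← mul_pow]; norm_num

theorem one_sub_four_mul_add_four_mul_pow_pos {x : ℝ} (hx₁ : -1 ≤ x) (hx : x < 1 / 4) {n : ℕ}
    (hn : n ≠ 0) : 0 < 1 - 4 * x + 4 * x ^ n := by
  rcases le_or_gt 0 x with hx₀ | hx₀
  · linarith [pow_nonneg hx₀ n]
  · have : |x ^ n| ≤ |x| := by
      rw [abs_pow]
      exact pow_le_of_le_one (abs_nonneg x) (abs_le.mpr ⟨hx₁, by linarith⟩) hn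
    linarith [neg_abs_le (x ^ n), abs_of_neg hx₀]

namespace Complex

theorem norm_sub_conj (z : ℂ) : ‖z - conj z‖ = 2 * |z.im| := by
  rw [sub_conj, norm_mul, norm_I, mul_one, norm_real, Real.norm_eq_abs, abs_mul, abs_two]

theorem abs_im_pow_le (z : ℂ) (n : ℕ) : |(z ^ n).im| ≤ n * ‖z‖ ^ (n - 1) * |z.im| := by
  have h := norm_pow_sub_pow_le le_rfl (norm_conj z).le n
  rw [← map_pow, norm_sub_conj, norm_sub_conj] at h
  linarith

theorem im_eq_zero_of_im_pow_eq {n : ℕ} (hn : 2 ≤ n) {z : ℂ} (hz : ‖z‖ < 1 / 2) {r : ℝ}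
    (hr : 1 ≤ |r|) (h : (z ^ n).im = r * z.im) : z.im = 0 := by
  by_contra hne
  have him : 0 < |z.im| := abs_pos.mpr hne
  have hlt : |r| * |z.im| < |r| * |z.im| :=
    calc |r| * |z.im| = |(z ^ n).im| := by rw [h, abs_mul]
      _ ≤ n * ‖z‖ ^ (n - 1) * |z.im| := abs_im_pow_le z n
      _ < 1 * |z.im| := by gcongr; exact nat_mul_pow_pred_lt_one hn (norm_nonneg z) hz
      _ ≤ |r| * |z.im| := by gcongr
  exact lt_irrefl _ hlt

theorem four_mul_pow_ne_mul_one_sub_four_mul {n : ℕ} (hn : 2 ≤ n) {z : ℂ} (hz : ‖z‖ < 1 / 2)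
    (hz' : ¬ (z.im = 0 ∧ 1 / 4 ≤ z.re ∧ z.re ≤ 1 / 2)) {r : ℝ} (hr : r ≤ -1) :
    4 * z ^ n ≠ r * (1 - 4 * z) := by
  intro h
  have him : (z ^ n).im = -r * z.im := by
    have := congrArg im h
    simp only [mul_im, sub_im, re_ofNat, im_ofNat, ofReal_re, ofReal_im, one_im] at this
    linarith
  have hreal := im_eq_zero_of_im_pow_eq hn hz (by linarith [le_abs_self (-r)]) him
  obtain ⟨x, rfl⟩ : ∃ x : ℝ, z = x := ⟨z.re, Complex.ext rfl (by simp [hreal])⟩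
  have hx : |x| < 1 / 2 := by rwa [norm_real, Real.norm_eq_abs] at hz
  have hx' : x < 1 / 4 := by
    by_contra! hge
    exact hz' ⟨ofReal_im x, hge, by rw [ofReal_re]; linarith [le_abs_self x]⟩
  have hxr : 4 * x ^ n = r * (1 - 4 * x) := by exact_mod_cast h
  have hpos : 0 < 1 - 4 * x + 4 * x ^ n :=
    one_sub_four_mul_add_four_mul_pow_pos (by linarith [neg_abs_le x]) hx' (by omega)
  have hrx : r * (1 - 4 * x) ≤ -1 * (1 - 4 * x) := by gcongr; linarith
  linarith

end Complex

theorem no_root_in_D_general (c : ℝ) (hc : 1 ≤ c) (p : ℕ) (z : ℂ)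
    (hz1 : ‖z‖ < 1 / 2)
    (hz2 : ¬ (z.im = 0 ∧ 1 / 4 ≤ z.re ∧ z.re ≤ 1 / 2)) :
    (c : ℂ) * (1 - 4 * z) + 4 * z ^ (p + 2) ≠ 0 ∧
    ∀ r : ℝ, r ≤ -1 → 4 * z ^ (p + 2) / (1 - 4 * z) ≠ (r : ℂ) := by
  have hne (r : ℝ) (hr : r ≤ -1) : 4 * z ^ (p + 2) ≠ r * (1 - 4 * z) :=
    four_mul_pow_ne_mul_one_sub_four_mul (by omega) hz1 hz2 hr
  have hden : (1 : ℂ) - 4 * z ≠ 0 := by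
    intro h
    have hz : z = 1 / 4 := by linear_combination -h / 4
    exact hz2 (by norm_num [hz])
  refine ⟨fun h ↦ hne (-c) (by linarith) ?_, fun r hr h ↦ hne r hr ?_⟩
  · push_cast
    linear_combination h
  · rwa [div_eq_iff hden] at h

/-- For `c ≥ 1`, `p ≥ 1`, and `z` in `D = {|z| < 1/2} \ [1/4, 1/2]`, the polynomial
`c(1−4z) + 4z^{p+2}` does not vanish; equivalently `u_p(z) = 4z^{p+2}/(1−4z)` avoids the
half-line `(−∞, −1]`. -/
theorem no_root_in_D (c : ℝ) (hc : 1 ≤ c) (p : ℕ) (hp : 1 ≤ p) (z : ℂ)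
    (hz1 : ‖z‖ < 1 / 2)
    (hz2 : ¬ (z.im = 0 ∧ 1 / 4 ≤ z.re ∧ z.re ≤ 1 / 2)) :
    (c : ℂ) * (1 - 4 * z) + 4 * z ^ (p + 2) ≠ 0 ∧
    ∀ r : ℝ, r ≤ -1 → 4 * z ^ (p + 2) / (1 - 4 * z) ≠ (r : ℂ) :=
  no_root_in_D_general c hc p z hz1 hz2
end
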